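/- Let U_j be a degree-p polynomial (in ξ ∈ [-1,1]) valued C¹ function of t satisfying, for every polynomial V of degree ≤ p, the DG weak form (d/dt)∫_{-1}^1 U_j V dξ + (2a/h_j)[U_j(1)V(1) − U_{j-1}(1)V(−1)] − (2a/h_j)∫_{-1}^1 U_j V' dξ = 0. Then U_j satisfies the strong-form PDE ∂_t U_j + (2a/h_j) ∂_ξ U_j = (−1)^{p+1} (a/h_j) [[U_j]] (R⁻_{p+1})'(ξ), where [[U_j]] = U_j(−1) − U_{j-1}(1). -/

import Mathlib

open Polynomial intervalIntegral

/-- The `k`-th Legendre polynomial, defined via the Rodrigues formula. -/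
noncomputable def leg (k : ℕ) : Polynomial ℝ :=
  C (1 / (2 ^ k * (k.factorial : ℝ))) * (fun q => derivative q)^[k] ((X ^ 2 - 1) ^ k)

/-- The right Radau polynomial `R⁻_{p+1} = P_{p+1} - P_p`. -/
noncomputable def radau (p : ℕ) : Polynomial ℝ := leg (p + 1) - leg p

/-!
Testing the weak form against `V` with `deg V ≤ p` and integrating `∫ U V'` by parts, everything
except the boundary jump `(2a/h) [[U]] V(-1)` matches the strong form tested against `V`. That
functional is represented by `(R⁻_{p+1})'`: integration by parts, `R⁻_{p+1}(1) = 0`,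
`R⁻_{p+1}(-1) = 2 (-1)^{p+1}` and the orthogonality of `P_p`, `P_{p+1}` to `V'` give
`∫ (R⁻_{p+1})' V = 2 (-1)^p V(-1)`. So the strong-form residual, a polynomial of degree `≤ p`, is
orthogonal to itself and vanishes. The time derivative passes through the `ξ`-integral because a
polynomial of degree `≤ p` depends linearly on its values at `p + 1` fixed nodes.
-/

theorem Polynomial.degree_lt_succ_iff {R : Type*} [Semiring R] {P : R[X]} {n : ℕ} :
    P.degree < ↑(n + 1) ↔ P.degree ≤ n := by
  rw [← mem_degreeLT, degreeLT_succ_eq_degreeLE, mem_degreeLE]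

theorem Polynomial.degree_derivative_lt_of_degree_le {R : Type*} [Semiring R] {P : R[X]} {n : ℕ}
    (hP : P.degree ≤ n) : (derivative P).degree < n := by
  rcases eq_or_ne P 0 with rfl | hP0
  · simp
  · exact (degree_derivative_lt hP0).trans_le hP

theorem Polynomial.isRoot_iterate_derivative_pow {R : Type*} [CommSemiring R] {Q : R[X]} {c : R}
    (hQ : Q.IsRoot c) {j m : ℕ} (hj : j < m) : (derivative^[j] (Q ^ m)).IsRoot c := by
  obtain ⟨r, hr⟩ := pow_sub_dvd_iterate_derivative_pow Q m j
  simp [IsRoot, hr, hQ.eq_zero, Nat.sub_ne_zero_of_lt hj]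

theorem Polynomial.eval_iterate_derivative_X_sub_C_pow_mul {R : Type*} [CommRing R] (k : ℕ)
    (c : R) (g : R[X]) : (derivative^[k] ((X - C c) ^ k * g)).eval c = k.factorial * g.eval c := by
  rw [iterate_derivative_mul, eval_finsetSum,
    Finset.sum_eq_single_of_mem _ (Finset.mem_range.2 k.succ_pos)]
  · simp [iterate_derivative_X_sub_pow_self]
  · intro i hi hi0
    rw [iterate_derivative_X_sub_pow, Nat.sub_sub_self (Finset.mem_range_succ_iff.1 hi)]
    simp [hi0]

theorem Polynomial.intervalIntegrable_eval_mul (P Q : ℝ[X]) {a b : ℝ} :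
    IntervalIntegrable (fun x => P.eval x * Q.eval x) MeasureTheory.volume a b :=
  (P.continuous.mul Q.continuous).intervalIntegrable a b

section TimeDerivative

variable {f : ℝ → ℝ[X]} {g : ℝ[X]} {t : ℝ} {n : ℕ} {v : Fin (n + 1) → ℝ}

theorem hasDerivAt_map_interpolate (hv : Function.Injective v) (hf : ∀ τ, (f τ).degree ≤ n)
    {r : Fin (n + 1) → ℝ} (hr : ∀ i, HasDerivAt (fun τ => (f τ).eval (v i)) (r i) t)
    (L : ℝ[X] →ₗ[ℝ] ℝ) :
    HasDerivAt (fun τ => L (f τ)) (L (Lagrange.interpolate Finset.univ v r)) t := by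
  set Φ := LinearMap.toContinuousLinearMap (L ∘ₗ Lagrange.interpolate Finset.univ v)
  have hf_eq : (fun τ => L (f τ)) = fun τ => Φ fun i => (f τ).eval (v i) := by
    funext τ
    conv_lhs => rw [Lagrange.eq_interpolate (f := f τ) (s := Finset.univ) hv.injOn
      (by rw [Finset.card_univ, Fintype.card_fin]; exact_mod_cast degree_lt_succ_iff.2 (hf τ))]
    rfl
  rw [hf_eq]
  exact Φ.hasFDerivAt.comp_hasDerivAt t (hasDerivAt_pi.2 hr)

theorem eq_interpolate_of_hasDerivAt_eval (hv : Function.Injective v)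
    (hf : ∀ τ, (f τ).degree ≤ n) (hg : ∀ x, HasDerivAt (fun τ => (f τ).eval x) (g.eval x) t) :
    g = Lagrange.interpolate Finset.univ v fun i => g.eval (v i) :=
  Polynomial.funext fun x =>
    (hg x).unique (hasDerivAt_map_interpolate hv hf (fun i => hg (v i)) (leval x))

theorem injective_natCast_val (n : ℕ) : Function.Injective fun i : Fin n => ((i : ℕ) : ℝ) :=
  Nat.cast_injective.comp Fin.val_injective

theorem degree_le_of_hasDerivAt_eval (hf : ∀ τ, (f τ).degree ≤ n)
    (hg : ∀ x, HasDerivAt (fun τ => (f τ).eval x) (g.eval x) t) : g.degree ≤ n := by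
  have hv := injective_natCast_val (n + 1)
  have := Lagrange.degree_interpolate_lt (s := Finset.univ)
    (fun i : Fin (n + 1) => g.eval ((i : ℕ) : ℝ)) hv.injOn
  rwa [← eq_interpolate_of_hasDerivAt_eval hv hf hg, Finset.card_univ, Fintype.card_fin,
    degree_lt_succ_iff] at this

theorem hasDerivAt_map_of_hasDerivAt_eval (hf : ∀ τ, (f τ).degree ≤ n)
    (hg : ∀ x, HasDerivAt (fun τ => (f τ).eval x) (g.eval x) t) (L : ℝ[X] →ₗ[ℝ] ℝ) :
    HasDerivAt (fun τ => L (f τ)) (L g) t := by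
  have hv := injective_natCast_val (n + 1)
  rw [eq_interpolate_of_hasDerivAt_eval hv hf hg]
  exact hasDerivAt_map_interpolate hv hf (fun i => hg _) L

end TimeDerivative

noncomputable def l2Form : LinearMap.BilinForm ℝ ℝ[X] :=
  LinearMap.mk₂ ℝ (fun P Q => ∫ x in (-1 : ℝ)..1, P.eval x * Q.eval x)
    (fun P₁ P₂ Q => by
      simp only [eval_add, add_mul]
      exact integral_add (intervalIntegrable_eval_mul _ _) (intervalIntegrable_eval_mul _ _))
    (fun c P Q => by simp only [eval_smul, smul_eq_mul, mul_assoc, integral_const_mul])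
    (fun P Q₁ Q₂ => by
      simp only [eval_add, mul_add]
      exact integral_add (intervalIntegrable_eval_mul _ _) (intervalIntegrable_eval_mul _ _))
    (fun c P Q => by simp only [eval_smul, smul_eq_mul, mul_left_comm _ c, integral_const_mul])

@[simp]
theorem l2Form_apply (P Q : ℝ[X]) : l2Form P Q = ∫ x in (-1 : ℝ)..1, P.eval x * Q.eval x :=
  rfl

theorem l2Form_derivative_add (P Q : ℝ[X]) :
    l2Form (derivative P) Q + l2Form P (derivative Q) =
      P.eval 1 * Q.eval 1 - P.eval (-1) * Q.eval (-1) := by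
  rw [l2Form_apply, l2Form_apply, ← integral_add (intervalIntegrable_eval_mul _ _)
    (intervalIntegrable_eval_mul _ _)]
  exact integral_eq_sub_of_hasDerivAt (fun x _ => by simpa using (P * Q).hasDerivAt x)
    ((intervalIntegrable_eval_mul _ _).add (intervalIntegrable_eval_mul _ _))

theorem l2Form_derivative_of_eval_eq_zero {P : ℝ[X]} (h_one : P.eval 1 = 0) (h_neg_one : P.eval (-1) = 0)
    (Q : ℝ[X]) : l2Form (derivative P) Q = -l2Form P (derivative Q) := by
  linear_combination l2Form_derivative_add P Q + Q.eval 1 * h_one - Q.eval (-1) * h_neg_one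

theorem l2Form_iterate_derivative {P : ℝ[X]} {j : ℕ}
    (h : ∀ i < j, (derivative^[i] P).eval 1 = 0 ∧ (derivative^[i] P).eval (-1) = 0) (Q : ℝ[X]) :
    l2Form (derivative^[j] P) Q = (-1) ^ j * l2Form P (derivative^[j] Q) := by
  induction j generalizing Q with
  | zero => simp
  | succ j ih =>
    obtain ⟨h_one, h_neg_one⟩ := h j j.lt_succ_self
    rw [Function.iterate_succ_apply', l2Form_derivative_of_eval_eq_zero h_one h_neg_one,
      ih (fun i hi => h i (hi.trans j.lt_succ_self)), ← Function.iterate_succ_apply, pow_succ]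
    ring

theorem eq_zero_of_l2Form_self_eq_zero {P : ℝ[X]} (h : l2Form P P = 0) : P = 0 := by
  by_contra hP
  obtain ⟨c, hc, hPc⟩ := ((Set.Icc_infinite (by norm_num : (-1 : ℝ) < 1)).sdiff
    (finite_setOfPred_isRoot hP)).nonempty
  have : 0 < l2Form P P :=
    integral_pos (by norm_num) (P.continuous.mul P.continuous).continuousOn
      (fun x _ => mul_self_nonneg _) ⟨c, hc, mul_self_pos.2 hPc⟩
  exact this.ne' h

theorem l2Form_leg_eq_zero {m : ℕ} {Q : ℝ[X]} (hQ : Q.degree < m) : l2Form (leg m) Q = 0 := by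
  have hroot : ∀ i < m, (derivative^[i] ((X ^ 2 - 1 : ℝ[X]) ^ m)).eval 1 = 0 ∧
      (derivative^[i] ((X ^ 2 - 1 : ℝ[X]) ^ m)).eval (-1) = 0 := fun i hi =>
    ⟨isRoot_iterate_derivative_pow (by simp) hi, isRoot_iterate_derivative_pow (by simp) hi⟩
  rw [leg, ← smul_eq_C_mul, map_smul, LinearMap.smul_apply, l2Form_iterate_derivative hroot,
    iterate_derivative_eq_zero_of_degree_lt hQ]
  simp

theorem leg_eval_one (k : ℕ) : (leg k).eval 1 = 1 := by
  have hfac : (X ^ 2 - 1 : ℝ[X]) ^ k = (X - C 1) ^ k * (X + C 1) ^ k := by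
    rw [← mul_pow]; congr 1; simp; ring
  rw [leg, eval_mul, eval_C, hfac, eval_iterate_derivative_X_sub_C_pow_mul]
  norm_num
  field_simp

theorem leg_eval_neg_one (k : ℕ) : (leg k).eval (-1) = (-1) ^ k := by
  have hfac : (X ^ 2 - 1 : ℝ[X]) ^ k = (X - C (-1)) ^ k * (X - C 1) ^ k := by
    rw [← mul_pow]; congr 1; simp; ring
  rw [leg, eval_mul, eval_C, hfac, eval_iterate_derivative_X_sub_C_pow_mul]
  norm_num
  rw [neg_pow]
  field_simp

theorem degree_leg_le (k : ℕ) : (leg k).degree ≤ k := by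
  refine degree_le_of_natDegree_le ((natDegree_C_mul_le _ _).trans ?_)
  refine (natDegree_iterate_derivative _ k).trans (Nat.sub_le_of_le_add ?_)
  refine natDegree_pow_le.trans ?_
  have : (X ^ 2 - 1 : ℝ[X]).natDegree ≤ 2 := (natDegree_sub_le _ _).trans (by simp)
  nlinarith

theorem degree_radau_le (p : ℕ) : (radau p).degree ≤ ↑(p + 1) :=
  (degree_sub_le _ _).trans
    (max_le (degree_leg_le _) ((degree_leg_le p).trans (by exact_mod_cast p.le_succ)))

theorem l2Form_derivative_radau {p : ℕ} {Q : ℝ[X]} (hQ : Q.degree ≤ p) :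
    l2Form (derivative (radau p)) Q = 2 * (-1) ^ p * Q.eval (-1) := by
  have hQ' := degree_derivative_lt_of_degree_le hQ
  have horth : l2Form (radau p) (derivative Q) = 0 := by
    rw [radau, map_sub, LinearMap.sub_apply, l2Form_leg_eq_zero hQ',
      l2Form_leg_eq_zero (hQ'.trans (by exact_mod_cast p.lt_succ_self)), sub_zero]
  have h := l2Form_derivative_add (radau p) Q
  simp only [radau, eval_sub, leg_eval_one, leg_eval_neg_one] at h
  rw [← radau, horth] at h
  linear_combination h

theorem DG_weak_implies_strong_general (p : ℕ) (a hj : ℝ)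
    (U U' : ℝ → Polynomial ℝ) (uL : ℝ → ℝ)
    (hdeg : ∀ t, (U t).degree ≤ p)
    (hderiv : ∀ t ξ, HasDerivAt (fun τ => (U τ).eval ξ) ((U' t).eval ξ) t)
    (hweak : ∀ t, ∀ V : Polynomial ℝ, V.degree ≤ p →
      HasDerivAt (fun τ => ∫ ξ in (-1 : ℝ)..1, (U τ).eval ξ * V.eval ξ)
        (-((2 * a / hj) * ((U t).eval 1 * V.eval 1 - uL t * V.eval (-1)) -
            (2 * a / hj) * ∫ ξ in (-1 : ℝ)..1, (U t).eval ξ * (derivative V).eval ξ)) t) :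
    ∀ t, ∀ ξ : ℝ,
      (U' t).eval ξ + (2 * a / hj) * (derivative (U t)).eval ξ =
        (-1 : ℝ) ^ (p + 1) * (a / hj) * ((U t).eval (-1) - uL t) *
          (derivative (radau p)).eval ξ := by
  intro t ξ
  have hU' : ∀ V : ℝ[X], V.degree ≤ p → l2Form (U' t) V =
      -((2 * a / hj) * ((U t).eval 1 * V.eval 1 - uL t * V.eval (-1)) -
        (2 * a / hj) * l2Form (U t) (derivative V)) := fun V hV =>
    (hasDerivAt_map_of_hasDerivAt_eval hdeg (hderiv t) (l2Form.flip V)).unique (hweak t V hV)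
  set K := (-1 : ℝ) ^ (p + 1) * (a / hj) * ((U t).eval (-1) - uL t)
  set G := U' t + (2 * a / hj) • derivative (U t) - K • derivative (radau p)
  have hGdeg : G ∈ degreeLE ℝ p := by
    refine sub_mem (add_mem ?_ (Submodule.smul_mem _ _ ?_)) (Submodule.smul_mem _ _ ?_) <;>
      rw [mem_degreeLE]
    · exact degree_le_of_hasDerivAt_eval hdeg (hderiv t)
    · exact (degree_derivative_lt_of_degree_le (hdeg t)).le
    · exact degree_lt_succ_iff.1 (degree_derivative_lt_of_degree_le (degree_radau_le p))
  have hsign : (-1 : ℝ) ^ (p + 1) * (-1) ^ p = -1 := by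
    rw [pow_succ, mul_right_comm, ← mul_pow]; simp
  have hGorth : ∀ V : ℝ[X], V.degree ≤ p → l2Form G V = 0 := fun V hV => by
    simp only [G, map_add, map_sub, map_smul, LinearMap.add_apply, LinearMap.sub_apply,
      LinearMap.smul_apply, smul_eq_mul, hU' V hV, l2Form_derivative_radau hV]
    linear_combination (2 * a / hj) * l2Form_derivative_add (U t) V -
      2 * (a / hj) * ((U t).eval (-1) - uL t) * V.eval (-1) * hsign
  have := congrArg (eval ξ) (eq_zero_of_l2Form_self_eq_zero (hGorth G (mem_degreeLE.1 hGdeg)))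
  simp only [G, eval_sub, eval_add, eval_smul, smul_eq_mul, eval_zero] at this
  linear_combination this

/-- If the degree-`p` polynomial `U t` (with time derivative `U' t`) satisfies the DG weak
form with upwind boundary datum `uL t = U_{j-1}(1)`, then it satisfies the strong-form PDE
`∂ₜ U + (2a/h) ∂_ξ U = (-1)^{p+1} (a/h) [[U]] (R⁻_{p+1})'`. -/
theorem DG_weak_implies_strong (p : ℕ) (a hj : ℝ) (ha : 0 < a) (hhj : 0 < hj)
    (U U' : ℝ → Polynomial ℝ) (uL : ℝ → ℝ)
    (hdeg : ∀ t, (U t).degree ≤ p)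
    (hderiv : ∀ t ξ, HasDerivAt (fun τ => (U τ).eval ξ) ((U' t).eval ξ) t)
    (hweak : ∀ t, ∀ V : Polynomial ℝ, V.degree ≤ p →
      HasDerivAt (fun τ => ∫ ξ in (-1 : ℝ)..1, (U τ).eval ξ * V.eval ξ)
        (-((2 * a / hj) * ((U t).eval 1 * V.eval 1 - uL t * V.eval (-1)) -
            (2 * a / hj) * ∫ ξ in (-1 : ℝ)..1, (U t).eval ξ * (derivative V).eval ξ)) t) :
    ∀ t, ∀ ξ : ℝ,
      (U' t).eval ξ + (2 * a / hj) * (derivative (U t)).eval ξ =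
        (-1 : ℝ) ^ (p + 1) * (a / hj) * ((U t).eval (-1) - uL t) *
          (derivative (radau p)).eval ξ :=
  DG_weak_implies_strong_general p a hj U U' uL hdeg hderiv hweak
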